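/- arXiv:2501.18721 — 2 statements merged into one kernel-verified Lean document; each statement's English description precedes it below -/
import Mathlib

section
/- For α = 2 and σ > 0, the function U_b(t,x) = x·(1 − 2Φ(−1/(σx√t))), where Φ is the standard normal cumulative distribution function, satisfies the PDE U_t = (1/2)σ²x⁴U_{xx} for all t > 0 and x > 0. -/
/-!
Write `U t x = x * g a` with `a = 1 / (σ x √t)` and `g a = 1 - 2 Φ(-a)`, so `g' = 2φ`.
The only property of `g` that matters is the Gaussian ODE `g'' a = -a g' a`. Since `a` is
`k / x` in space and `c / √t` in time, the chain rule gives `U_xx = a² g''(a) / x` and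
`U_t = -a x g'(a) / (2t)`, and `σ² x² a² = 1 / t` turns the ODE into the PDE.
-/

open Real Set MeasureTheory

noncomputable def stdNormalCDF (z : ℝ) : ℝ :=
  (1 / Real.sqrt (2 * Real.pi)) * ∫ s in Set.Iic z, Real.exp (-s^2 / 2)

lemma hasDerivAt_integral_Iic {E : Type*} [NormedAddCommGroup E] [NormedSpace ℝ E]
    [CompleteSpace E] {f : ℝ → E} (hf : Integrable f) (hc : Continuous f) (z : ℝ) :
    HasDerivAt (fun w => ∫ s in Iic w, f s) (f z) z := by
  have hsplit : (fun w => ∫ s in Iic w, f s)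
      = fun w => (∫ s in Iic 0, f s) + ∫ s in (0 : ℝ)..w, f s := by
    ext w
    rw [← intervalIntegral.integral_Iic_sub_Iic hf.integrableOn hf.integrableOn, add_sub_cancel]
  rw [hsplit]
  exact (intervalIntegral.integral_hasDerivAt_right hf.intervalIntegrable
    hc.aestronglyMeasurable.stronglyMeasurableAtFilter hc.continuousAt).const_add _

noncomputable def stdNormalPDF (z : ℝ) : ℝ :=
  1 / √(2 * π) * exp (-z ^ 2 / 2)

lemma hasDerivAt_stdNormalCDF (z : ℝ) : HasDerivAt stdNormalCDF (stdNormalPDF z) z := by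
  have hint : Integrable fun s : ℝ => exp (-s ^ 2 / 2) := by
    convert integrable_exp_neg_mul_sq (b := 1 / 2) (by norm_num) using 3 with s
    ring
  exact (hasDerivAt_integral_Iic hint (by fun_prop) z).const_mul _

lemma stdNormalPDF_neg (z : ℝ) : stdNormalPDF (-z) = stdNormalPDF z := by
  rw [stdNormalPDF, stdNormalPDF, neg_sq]

lemma hasDerivAt_stdNormalPDF (z : ℝ) :
    HasDerivAt stdNormalPDF (-z * stdNormalPDF z) z := by
  unfold stdNormalPDF
  exact ((((hasDerivAt_pow 2 z).fun_neg).div_const 2).exp.const_mul _).congr_deriv (by ring)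

lemma hasDerivAt_const_div (k : ℝ) {y : ℝ} (hy : y ≠ 0) :
    HasDerivAt (fun ξ => k / ξ) (-(k / y) / y) y :=
  ((hasDerivAt_const y k).fun_div (hasDerivAt_id' y) hy).congr_deriv (by ring)

lemma hasDerivAt_comp_div {g g' : ℝ → ℝ} {k y : ℝ} (hg : HasDerivAt g (g' (k / y)) (k / y))
    (hy : y ≠ 0) : HasDerivAt (fun ξ => g (k / ξ)) (g' (k / y) * (-(k / y) / y)) y :=
  hg.comp y (hasDerivAt_const_div k hy)

lemma hasDerivAt_mul_comp_div {g g' : ℝ → ℝ} {k y : ℝ} (hg : HasDerivAt g (g' (k / y)) (k / y))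
    (hy : y ≠ 0) :
    HasDerivAt (fun ξ => ξ * g (k / ξ)) (g (k / y) - k / y * g' (k / y)) y :=
  ((hasDerivAt_id' y).mul (hasDerivAt_comp_div hg hy)).congr_deriv (by field_simp; ring)

lemma hasDerivAt_deriv_mul_comp_div {g g' g'' : ℝ → ℝ} (hg : ∀ a, HasDerivAt g (g' a) a)
    (hg' : ∀ a, HasDerivAt g' (g'' a) a) {k y : ℝ} (hy : y ≠ 0) :
    HasDerivAt (deriv fun ξ => ξ * g (k / ξ)) (k ^ 2 / y ^ 3 * g'' (k / y)) y := by
  have hderiv : (deriv fun ξ => ξ * g (k / ξ)) =ᶠ[nhds y]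
      fun ξ => g (k / ξ) - k / ξ * g' (k / ξ) := by
    filter_upwards [isOpen_ne.mem_nhds hy] with ξ hξ
    exact (hasDerivAt_mul_comp_div (hg _) hξ).deriv
  refine HasDerivAt.congr_of_eventuallyEq ?_ hderiv
  exact ((hasDerivAt_comp_div (hg _) hy).sub
    ((hasDerivAt_const_div k hy).mul (hasDerivAt_comp_div (hg' _) hy))).congr_deriv
      (by field_simp; ring)

lemma hasDerivAt_comp_div_sqrt {g g' : ℝ → ℝ} {c t : ℝ}
    (hg : HasDerivAt g (g' (c / √t)) (c / √t)) (ht : 0 < t) :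
    HasDerivAt (fun τ => g (c / √τ)) (g' (c / √t) * (-(c / √t) / (2 * t))) t := by
  refine hg.comp t (((hasDerivAt_const t c).fun_div (hasDerivAt_sqrt ht.ne')
    (sqrt_pos.2 ht).ne').congr_deriv ?_)
  rw [sq_sqrt ht.le]
  have hs := (sqrt_pos.2 ht).ne'
  field_simp
  ring

theorem bubble_pde_of_deriv_deriv_eq_neg_mul {g g' : ℝ → ℝ} (hg : ∀ a, HasDerivAt g (g' a) a)
    (hg' : ∀ a, HasDerivAt g' (-a * g' a) a) {σ t x : ℝ} (hσ : σ ≠ 0) (ht : 0 < t) (hx : x ≠ 0) :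
    deriv (fun τ => x * g (1 / (σ * x * √τ))) t
      = 1 / 2 * σ ^ 2 * x ^ 4 * deriv (deriv fun ξ => ξ * g (1 / (σ * ξ * √t))) x := by
  have hτ : (fun τ => x * g (1 / (σ * x * √τ))) = fun τ => x * g (1 / (σ * x) / √τ) := by
    ext τ
    ring_nf
  have hξ : (fun ξ => ξ * g (1 / (σ * ξ * √t))) = fun ξ => ξ * g (1 / (σ * √t) / ξ) := by
    ext ξ
    ring_nf
  have ha : 1 / (σ * √t) / x = 1 / (σ * x) / √t := by ring
  rw [hτ, hξ, ((hasDerivAt_comp_div_sqrt (hg _) ht).const_mul x).deriv,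
    (hasDerivAt_deriv_mul_comp_div hg hg' hx).deriv, ha]
  have hs := (sqrt_pos.2 ht).ne'
  field_simp
  rw [sq_sqrt ht.le]
  ring

lemma hasDerivAt_one_sub_two_mul_stdNormalCDF_neg (a : ℝ) :
    HasDerivAt (fun z => 1 - 2 * stdNormalCDF (-z)) (2 * stdNormalPDF a) a :=
  ((((hasDerivAt_stdNormalCDF (-a)).comp a (hasDerivAt_neg a)).const_mul 2).const_sub 1
    ).congr_deriv (by rw [stdNormalPDF_neg]; ring)

theorem bubble_solution_satisfies_pde
    (σ : ℝ) (hσ : 0 < σ)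
    (U : ℝ → ℝ → ℝ)
    (hU : ∀ t x, U t x = x * (1 - 2 * stdNormalCDF (-(1 / (σ * x * Real.sqrt t))))) :
    ∀ t : ℝ, 0 < t → ∀ x : ℝ, 0 < x →
      deriv (fun τ => U τ x) t
        = (1/2) * σ^2 * x^4 * deriv (deriv (fun ξ => U t ξ)) x := by
  intro t ht x hx
  obtain rfl : U = fun t x => x * (1 - 2 * stdNormalCDF (-(1 / (σ * x * Real.sqrt t)))) :=
    funext₂ hU
  exact bubble_pde_of_deriv_deriv_eq_neg_mul hasDerivAt_one_sub_two_mul_stdNormalCDF_neg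
    (fun a => ((hasDerivAt_stdNormalPDF a).const_mul 2).congr_deriv (by ring)) hσ.ne' ht hx.ne'
end

section
/- If c < a (both a > 0), then for the function u(t,y) = t^{c/a−2}·exp(−y/(at)) and any fixed y₀ > 0, the integral ∫₀^{y₀} u(t,z) dz tends to +∞ as t → 0⁺. -/
open Real Set Filter Topology

/-!
Integrating the exponential in closed form gives, for `t > 0`,
`∫₀^{y₀} u(t,z) dz = t^{c/a-1} · a(1 - exp(-y₀/(at)))`. The second factor tends to `a > 0`
and the exponent `c/a - 1` is negative, so the integral blows up as `t → 0⁺`.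
-/

theorem integral_exp_neg_div (y : ℝ) {k : ℝ} (hk : k ≠ 0) :
    ∫ z in (0 : ℝ)..y, exp (-z / k) = k * (1 - exp (-y / k)) := by
  have h := intervalIntegral.integral_comp_div (fun x => exp (-x)) hk (a := 0) (b := y)
  simp only [neg_div] at h ⊢
  rw [h, intervalIntegral.integral_comp_neg, integral_exp, zero_div, neg_zero, exp_zero,
    smul_eq_mul]

theorem tendsto_exp_neg_div_nhdsGT_zero {y : ℝ} (hy : 0 < y) :
    Tendsto (fun t => exp (-y / t)) (𝓝[>] 0) (𝓝 0) := by
  have : Tendsto (fun t : ℝ => y / t) (𝓝[>] 0) atTop :=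
    (tendsto_inv_nhdsGT_zero.const_mul_atTop hy).congr fun t => (div_eq_mul_inv y t).symm
  simpa only [neg_div, Function.comp_def] using tendsto_exp_neg_atTop_nhds_zero.comp this

theorem feller_solution_nonintegrable_singularity
    (a c : ℝ) (ha : 0 < a) (hc : c < a)
    (u : ℝ → ℝ → ℝ)
    (hu : ∀ t y, u t y = t ^ (c / a - 2) * Real.exp (-y / (a * t)))
    (y₀ : ℝ) (hy₀ : 0 < y₀) :
    Tendsto (fun t => ∫ z in (0:ℝ)..y₀, u t z) (nhdsWithin 0 (Set.Ioi 0)) atTop := by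
  have h_integral : ∀ t > 0, ∫ z in (0:ℝ)..y₀, u t z
      = t ^ (c / a - 1) * (a * (1 - exp (-(y₀ / a) / t))) := by
    intro t ht
    have hat : a * t ≠ 0 := (mul_pos ha ht).ne'
    simp only [hu, intervalIntegral.integral_const_mul, integral_exp_neg_div y₀ hat]
    rw [show c / a - 1 = c / a - 2 + 1 by ring, rpow_add_one ht.ne']
    simp only [neg_div, div_div]
    ring
  have h_pow : Tendsto (fun t : ℝ => t ^ (c / a - 1)) (𝓝[>] 0) atTop :=
    tendsto_rpow_neg_nhdsGT_zero (by rw [sub_neg, div_lt_one ha]; exact hc)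
  have h_mass : Tendsto (fun t => a * (1 - exp (-(y₀ / a) / t))) (𝓝[>] 0) (𝓝 a) := by
    simpa using ((tendsto_exp_neg_div_nhdsGT_zero (div_pos hy₀ ha)).const_sub 1).const_mul a
  refine (h_pow.atTop_mul_pos ha h_mass).congr' ?_
  filter_upwards [self_mem_nhdsWithin] with t ht
  exact (h_integral t ht).symm
end
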